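/- Let k be a field and Λ1, Λ2 ∈ k. Suppose x1, z1, x2, z2, y12 ∈ k satisfy the double quadric equation y12² = x1·z1·(x1 − z1)·(x1 − Λ1 z1)·x2·z2·(x2 − z2)·(x2 − Λ2 z2). Define Z00 = (x1² − 2Λ1 x1 z1 + Λ1 z1²)(x2² − 2Λ2 x2 z2 + Λ2 z2²), Z01 = (x1² − Λ1 z1²)(x2² − Λ2 z2²), Z10 = (x1² − 2 x1 z1 + Λ1 z1²)(x2² − 2 x2 z2 + Λ2 z2²), and Z11 = 4·y12 (or Z11 = −4·y12). Then V(Z00, Z01, Z10, Z11) = 0, where V is the quartic Z00⁴ + (1−Λ1)(1−Λ2)Z01⁴ + Λ1Λ2·Z10⁴ + Λ1Λ2(1−Λ1)(1−Λ2)Z11⁴ − (2−Λ1−Λ2)(Z00²Z01² + Λ1Λ2·Z10²Z11²) − (2Λ1Λ2−Λ1−Λ2)(Z00²Z11² + Z01²Z10²) − (Λ1+Λ2)(Z00²Z10² + (1−Λ1)(1−Λ2)Z01²Z11²). -/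

import Mathlib

/-- The quartic defining the singular Kummer surface of the Jacobian of the
genus-two curve glued from two elliptic curves with Legendre moduli `Λ1, Λ2`. -/
def kummerV {k : Type*} [Field k] (L1 L2 Z00 Z01 Z10 Z11 : k) : k :=
  Z00^4 + (1 - L1) * (1 - L2) * Z01^4 + L1 * L2 * Z10^4
    + L1 * L2 * (1 - L1) * (1 - L2) * Z11^4
    - (2 - L1 - L2) * (Z00^2 * Z01^2 + L1 * L2 * Z10^2 * Z11^2)
    - (2 * L1 * L2 - L1 - L2) * (Z00^2 * Z11^2 + Z01^2 * Z10^2)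
    - (L1 + L2) * (Z00^2 * Z10^2 + (1 - L1) * (1 - L2) * Z01^2 * Z11^2)

/-! `V` involves `Z11` only through `Z11 ^ 2`, and `Z11 ^ 2 = 16 y12 ^ 2` is, by the double quadric
equation, a polynomial in `x1, z1, x2, z2`. After this substitution `V = 0` becomes an identity
of polynomials in `x1, z1, x2, z2, Λ1, Λ2`. -/

section

variable {k : Type*} [Field k]

theorem kummerV_congr_sq (L1 L2 Z00 Z01 Z10 : k) {Z11 W : k} (h : Z11 ^ 2 = W ^ 2) :
    kummerV L1 L2 Z00 Z01 Z10 Z11 = kummerV L1 L2 Z00 Z01 Z10 W := by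
  unfold kummerV
  rw [show Z11 ^ 4 = (Z11 ^ 2) ^ 2 by ring, h]
  ring

theorem kummerV_double_quadric_eq_zero (L1 L2 x1 z1 x2 z2 y : k)
    (hdq : y ^ 2 = x1 * z1 * (x1 - z1) * (x1 - L1 * z1) *
      (x2 * z2 * (x2 - z2) * (x2 - L2 * z2))) :
    kummerV L1 L2
      ((x1 ^ 2 - 2 * L1 * x1 * z1 + L1 * z1 ^ 2) * (x2 ^ 2 - 2 * L2 * x2 * z2 + L2 * z2 ^ 2))
      ((x1 ^ 2 - L1 * z1 ^ 2) * (x2 ^ 2 - L2 * z2 ^ 2))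
      ((x1 ^ 2 - 2 * x1 * z1 + L1 * z1 ^ 2) * (x2 ^ 2 - 2 * x2 * z2 + L2 * z2 ^ 2))
      (4 * y) = 0 := by
  unfold kummerV
  rw [show (4 * y) ^ 4 = 256 * (y ^ 2) ^ 2 by ring, show (4 * y) ^ 2 = 16 * y ^ 2 by ring, hdq]
  ring

end

/-- The gluing map from the double-quadric Kummer surface of `E1 × E2` to the
quartic Kummer surface of the Jacobian of the glued genus-two curve: a point of
the double quadric maps to a point of the quartic `V = 0`. -/
theorem product_kummer_maps_to_jacobian_kummer {k : Type*} [Field k]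
    (L1 L2 : k) (x1 z1 x2 z2 y12 : k)
    (hdq : y12^2 = x1 * z1 * (x1 - z1) * (x1 - L1 * z1) *
      (x2 * z2 * (x2 - z2) * (x2 - L2 * z2)))
    (Z00 Z01 Z10 Z11 : k)
    (hZ00 : Z00 = (x1^2 - 2*L1*x1*z1 + L1*z1^2) * (x2^2 - 2*L2*x2*z2 + L2*z2^2))
    (hZ01 : Z01 = (x1^2 - L1*z1^2) * (x2^2 - L2*z2^2))
    (hZ10 : Z10 = (x1^2 - 2*x1*z1 + L1*z1^2) * (x2^2 - 2*x2*z2 + L2*z2^2))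
    (hZ11 : Z11 = 4 * y12 ∨ Z11 = -(4 * y12)) :
    kummerV L1 L2 Z00 Z01 Z10 Z11 = 0 := by
  have hsq : Z11 ^ 2 = (4 * y12) ^ 2 := by
    rcases hZ11 with rfl | rfl <;> ring
  rw [kummerV_congr_sq L1 L2 Z00 Z01 Z10 hsq, hZ00, hZ01, hZ10]
  exact kummerV_double_quadric_eq_zero L1 L2 x1 z1 x2 z2 y12 hdq
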